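/- arXiv:2104.01892 — 4 statements merged into one kernel-verified Lean document; each statement's English description precedes it below -/
import Mathlib

section
/- If a framework (G, p̂) in ℝ^D is globally rigid, then its orthogonal projection (G, p) onto a coordinate subspace ℝ^d (d ≤ D) is globally rigid in ℝ^d. -/
/-!
Given `q` equivalent to the projection `p` in `ℝ^d`, lift it to `ℝ^D` by keeping the last `D - d`
coordinates of `p̂` and replacing the first `d` by those of `q`. A squared distance in `ℝ^D` is the
squared distance of the projections plus a tail sum, and the lift has the same tails as `p̂`; so a
pair has the same distance in `p̂` and in the lift exactly when it has the same distance in `p` and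
in `q`. Hence the lift is equivalent to `p̂`, so congruent to it by global rigidity, and then `q` is
congruent to `p`.
-/

/-- Orthogonal projection of `ℝ^D` onto the coordinate subspace `ℝ^d` (first `d` coordinates). -/
def proj {d D : ℕ} (h : d ≤ D) (x : EuclideanSpace ℝ (Fin D)) : EuclideanSpace ℝ (Fin d) :=
  WithLp.toLp 2 (fun k => x (Fin.castLE h k))

/-- Frameworks are equivalent: same edge lengths. -/
def FrameworkEquiv {V : Type*} {d D : ℕ} (G : SimpleGraph V)
    (p : V → EuclideanSpace ℝ (Fin d)) (q : V → EuclideanSpace ℝ (Fin D)) : Prop :=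
  ∀ i j, G.Adj i j → dist (p i) (p j) = dist (q i) (q j)

/-- Frameworks are congruent: same distances for all pairs of vertices. -/
def FrameworkCongruent {V : Type*} {d D : ℕ}
    (p : V → EuclideanSpace ℝ (Fin d)) (q : V → EuclideanSpace ℝ (Fin D)) : Prop :=
  ∀ i j, dist (p i) (p j) = dist (q i) (q j)

/-- Global rigidity of `(G, p)` in `ℝ^d`. -/
def GloballyRigid {V : Type*} {d : ℕ} (G : SimpleGraph V)
    (p : V → EuclideanSpace ℝ (Fin d)) : Prop :=
  ∀ q : V → EuclideanSpace ℝ (Fin d), FrameworkEquiv G p q → FrameworkCongruent p q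

open Finset

section ReplaceHead

variable {d D : ℕ} (h : d ≤ D)

lemma dist_sq_eq_dist_proj_sq_add (x y : EuclideanSpace ℝ (Fin D)) :
    dist x y ^ 2 = dist (proj h x) (proj h y) ^ 2 +
      ∑ k : Fin D with d ≤ k.val, (x k - y k) ^ 2 := by
  have head : ∑ k : Fin D with ¬d ≤ k.val, (x k - y k) ^ 2 =
      ∑ k : Fin d, (x (Fin.castLE h k) - y (Fin.castLE h k)) ^ 2 := by
    have : ({k | ¬d ≤ k.val} : Finset (Fin D)) = univ.map (Fin.castLEEmb h) := by
      ext k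
      simpa using ⟨fun hk => ⟨⟨k, hk⟩, rfl⟩, fun ⟨j, hj⟩ => hj ▸ j.isLt⟩
    rw [this, sum_map]
    rfl
  simp only [EuclideanSpace.dist_eq, Real.dist_eq, sq_abs, proj]
  rw [Real.sq_sqrt (by positivity), Real.sq_sqrt (by positivity), ← head, add_comm,
    sum_filter_add_sum_filter_not]

def replaceHead (a : EuclideanSpace ℝ (Fin d)) (x : EuclideanSpace ℝ (Fin D)) :
    EuclideanSpace ℝ (Fin D) :=
  WithLp.toLp 2 fun k => if hk : (k : ℕ) < d then a ⟨k, hk⟩ else x k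

@[simp]
lemma proj_replaceHead (a : EuclideanSpace ℝ (Fin d)) (x : EuclideanSpace ℝ (Fin D)) :
    proj h (replaceHead a x) = a := by
  ext k
  simp [proj, replaceHead]

lemma dist_replaceHead_sq_sub (a b : EuclideanSpace ℝ (Fin d)) (x y : EuclideanSpace ℝ (Fin D)) :
    dist (replaceHead a x) (replaceHead b y) ^ 2 - dist a b ^ 2 =
      dist x y ^ 2 - dist (proj h x) (proj h y) ^ 2 := by
  have tail : ∑ k : Fin D with d ≤ k.val, (replaceHead a x k - replaceHead b y k) ^ 2 =
      ∑ k : Fin D with d ≤ k.val, (x k - y k) ^ 2 :=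
    sum_congr rfl fun k hk => by simp [replaceHead, not_lt.2 (mem_filter.1 hk).2]
  rw [dist_sq_eq_dist_proj_sq_add h x, dist_sq_eq_dist_proj_sq_add h (replaceHead a x), tail,
    proj_replaceHead, proj_replaceHead]
  ring

lemma dist_replaceHead_eq_iff (a b : EuclideanSpace ℝ (Fin d)) (x y : EuclideanSpace ℝ (Fin D)) :
    dist x y = dist (replaceHead a x) (replaceHead b y) ↔
      dist (proj h x) (proj h y) = dist a b := by
  have := dist_replaceHead_sq_sub h a b x y
  rw [← sq_eq_sq₀ dist_nonneg dist_nonneg, ← sq_eq_sq₀ dist_nonneg dist_nonneg]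
  constructor <;> intro <;> linarith

end ReplaceHead

/-- If a framework `(G, p̂)` in `ℝ^D` is globally rigid, then its orthogonal projection onto the
coordinate subspace `ℝ^d` (`d ≤ D`) is globally rigid in `ℝ^d`. -/
theorem globallyRigid_of_projection {V : Type*} {d D : ℕ} (h : d ≤ D) (G : SimpleGraph V)
    (phat : V → EuclideanSpace ℝ (Fin D)) (hGR : GloballyRigid G phat) :
    GloballyRigid G (fun i => proj h (phat i)) := by
  intro q hq i j
  have key : ∀ i j, dist (phat i) (phat j) =
      dist (replaceHead (q i) (phat i)) (replaceHead (q j) (phat j)) ↔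
      dist (proj h (phat i)) (proj h (phat j)) = dist (q i) (q j) :=
    fun i j => dist_replaceHead_eq_iff h _ _ _ _
  exact (key i j).1 (hGR _ (fun i j hij => (key i j).2 (hq i j hij)) i j)
end

section
/- If a framework (G, p̂) in ℝ^D is universally rigid, then its orthogonal projection (G, p) onto ℝ^d (d ≤ D) is universally rigid in ℝ^d. -/
/-- Universal rigidity of `(G, p)` in `ℝ^d`: every equivalent framework in any `ℝ^D`, `D ≥ d`,
is congruent to `(G, p)`. -/
def UniversallyRigid {V : Type*} {d : ℕ} (G : SimpleGraph V)
    (p : V → EuclideanSpace ℝ (Fin d)) : Prop :=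
  ∀ D : ℕ, d ≤ D → ∀ q : V → EuclideanSpace ℝ (Fin D),
    FrameworkEquiv G p q → FrameworkCongruent p q

/-!
Split `ℝ^D = ℝ^d × ℝ^(D-d)` and write `p̂ = (p, t)`. Given `q` in `ℝ^{D'}` with the edge lengths
of `p`, the framework `(q, t)` in `ℝ^{D' + (D-d)}` has the edge lengths of `p̂`, because squared
distances add over the two factors. Universal rigidity of `p̂` makes `(q, t)` congruent to `p̂`,
and cancelling the common contribution of `t` makes `q` congruent to `p`.
-/

section

variable {a b d D : ℕ}

def projTail (h : d ≤ D) (x : EuclideanSpace ℝ (Fin D)) : EuclideanSpace ℝ (Fin (D - d)) :=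
  WithLp.toLp 2 (fun k => x (Fin.cast (Nat.add_sub_cancel' h) (Fin.natAdd d k)))

def finAppend (x : EuclideanSpace ℝ (Fin a)) (u : EuclideanSpace ℝ (Fin b)) :
    EuclideanSpace ℝ (Fin (a + b)) :=
  WithLp.toLp 2 (Fin.append x u)

theorem dist_finAppend_sq (x y : EuclideanSpace ℝ (Fin a)) (u v : EuclideanSpace ℝ (Fin b)) :
    dist (finAppend x u) (finAppend y v) ^ 2 = dist x y ^ 2 + dist u v ^ 2 := by
  simp only [PiLp.dist_sq_eq_of_L2, Fin.sum_univ_add, finAppend, Fin.append_left,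
    Fin.append_right]

theorem dist_sq_eq_dist_proj_sq_add_dist_projTail_sq (h : d ≤ D)
    (x y : EuclideanSpace ℝ (Fin D)) :
    dist x y ^ 2 = dist (proj h x) (proj h y) ^ 2 + dist (projTail h x) (projTail h y) ^ 2 := by
  have hD : d + (D - d) = D := Nat.add_sub_cancel' h
  simp only [PiLp.dist_sq_eq_of_L2, proj, projTail]
  rw [← Fintype.sum_equiv (finCongr hD)
    (fun k => dist (x (Fin.cast hD k)) (y (Fin.cast hD k)) ^ 2) _ fun k => rfl, Fin.sum_univ_add]
  rfl

theorem dist_finAppend_proj_projTail (h : d ≤ D) (x y : EuclideanSpace ℝ (Fin D)) :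
    dist (finAppend (proj h x) (projTail h x)) (finAppend (proj h y) (projTail h y)) =
      dist x y := by
  rw [← sq_eq_sq₀ dist_nonneg dist_nonneg, dist_finAppend_sq,
    dist_sq_eq_dist_proj_sq_add_dist_projTail_sq h]

theorem dist_finAppend_eq_dist_finAppend_iff {a' : ℕ} (x y : EuclideanSpace ℝ (Fin a))
    (x' y' : EuclideanSpace ℝ (Fin a')) (u v : EuclideanSpace ℝ (Fin b)) :
    dist (finAppend x u) (finAppend y v) = dist (finAppend x' u) (finAppend y' v) ↔
      dist x y = dist x' y' := by
  rw [← sq_eq_sq₀ dist_nonneg dist_nonneg, dist_finAppend_sq, dist_finAppend_sq, add_left_inj,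
    sq_eq_sq₀ dist_nonneg dist_nonneg]

end

/-- If a framework `(G, p̂)` in `ℝ^D` is universally rigid, then its orthogonal projection onto
the coordinate subspace `ℝ^d` (`d ≤ D`) is universally rigid in `ℝ^d`. -/
theorem universallyRigid_of_projection {V : Type*} {d D : ℕ} (h : d ≤ D) (G : SimpleGraph V)
    (phat : V → EuclideanSpace ℝ (Fin D)) (hUR : UniversallyRigid G phat) :
    UniversallyRigid G (fun i => proj h (phat i)) := by
  intro D' hD' q hpq
  set t := fun i => projTail h (phat i)
  have hphat : ∀ i j, dist (phat i) (phat j) =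
      dist (finAppend (proj h (phat i)) (t i)) (finAppend (proj h (phat j)) (t j)) :=
    fun i j => (dist_finAppend_proj_projTail h _ _).symm
  have hequiv : FrameworkEquiv G phat fun i => finAppend (q i) (t i) := fun i j hij => by
    rw [hphat, dist_finAppend_eq_dist_finAppend_iff]
    exact hpq i j hij
  have hcong := hUR _ (by omega) _ hequiv
  intro i j
  rw [← dist_finAppend_eq_dist_finAppend_iff _ _ _ _ (t i) (t j), ← hphat]
  exact hcong i j
end

section
/- Universal rigidity is invariant under arbitrary (possibly singular) affine transformations: if (G, p) is a universally rigid framework in ℝ^d and A : ℝ^d → ℝ^d is an affine map, then (G, A∘p) is universally rigid (in its affine span). -/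
/-! For the linear part `L` of `A` pick `c > 0` with `‖L v‖ ≤ c ‖v‖`. The positive operator
`c² - L⋆L` is a Gram operator `M⋆M`, so `v ↦ c⁻¹ • (L v, M v)` is an isometric embedding.
A framework `q` equivalent to `L ∘ p` lifts to `c⁻¹ • (q, M ∘ p)`, which is equivalent to `p` and
hence congruent to it; projecting back, `q` is congruent to `L ∘ p`. The translation part of `A`
changes no distance. -/

open Module RealInnerProductSpace

section InnerProductSpace

variable {E F : Type*} [NormedAddCommGroup E] [InnerProductSpace ℝ E]
  [NormedAddCommGroup F] [InnerProductSpace ℝ F]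

theorem ContinuousLinearMap.IsPositive.exists_norm_sq_eq_inner [FiniteDimensional ℝ E]
    {T : E →L[ℝ] E} (hT : T.IsPositive) :
    ∃ (m : ℕ) (M : E →ₗ[ℝ] EuclideanSpace ℝ (Fin m)), ∀ v, ‖M v‖ ^ 2 = ⟪T v, v⟫ := by
  obtain ⟨m, u, rfl⟩ := ContinuousLinearMap.isPositive_iff_eq_sum_rankOne.1 hT
  refine ⟨m, (EuclideanSpace.equiv (Fin m) ℝ).symm.toLinearMap ∘ₗ
    LinearMap.pi fun i => innerₛₗ ℝ (u i), fun v => ?_⟩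
  rw [EuclideanSpace.norm_sq_eq]
  simp [sum_inner, real_inner_smul_left, sq]

theorem ContinuousLinearMap.exists_norm_sq_add_norm_sq_eq [FiniteDimensional ℝ E]
    [CompleteSpace F] (L : E →L[ℝ] F) :
    ∃ c > 0, ∃ (m : ℕ) (M : E →ₗ[ℝ] EuclideanSpace ℝ (Fin m)),
      ∀ v, ‖L v‖ ^ 2 + ‖M v‖ ^ 2 = c ^ 2 * ‖v‖ ^ 2 := by
  set c := ‖L‖ + 1
  have hinner : ∀ v, ⟪(c ^ 2 • 1 - L.adjoint ∘L L) v, v⟫ = c ^ 2 * ‖v‖ ^ 2 - ‖L v‖ ^ 2 := by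
    intro v
    simp [inner_sub_left, real_inner_smul_left, ContinuousLinearMap.adjoint_inner_left]
  have hpos : (c ^ 2 • 1 - L.adjoint ∘L L).IsPositive := by
    refine (ContinuousLinearMap.isPositive_iff' _).2 ⟨?_, fun v => ?_⟩
    · exact .sub ((IsSelfAdjoint.all _).smul (.one _)) L.isPositive_adjoint_comp_self.isSelfAdjoint
    · rw [hinner, sub_nonneg, ← mul_pow]
      gcongr
      exact L.le_opNorm v |>.trans (by gcongr; linarith)
  obtain ⟨m, M, hM⟩ := hpos.exists_norm_sq_eq_inner
  exact ⟨c, by positivity, m, M, fun v => by rw [hM, hinner]; ring⟩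

end InnerProductSpace

theorem dist_map_eq_iff_dist_eq_dist_smul_toLp {X Y H K : Type*}
    [SeminormedAddCommGroup X] [NormedSpace ℝ X] [SeminormedAddCommGroup Y] [NormedSpace ℝ Y]
    [SeminormedAddCommGroup H] [NormedSpace ℝ H] [SeminormedAddCommGroup K] [NormedSpace ℝ K]
    {L : X →ₗ[ℝ] Y} {M : X →ₗ[ℝ] H} {c : ℝ} (hc : 0 < c)
    (hLM : ∀ v, ‖L v‖ ^ 2 + ‖M v‖ ^ 2 = c ^ 2 * ‖v‖ ^ 2) (x y : X) (a b : K) :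
    dist (L x) (L y) = dist a b ↔
      dist x y = dist (c⁻¹ • WithLp.toLp 2 (a, M x)) (c⁻¹ • WithLp.toLp 2 (b, M y)) := by
  have hlift : dist (c⁻¹ • WithLp.toLp 2 (a, M x)) (c⁻¹ • WithLp.toLp 2 (b, M y)) ^ 2 =
      c⁻¹ ^ 2 * (dist a b ^ 2 + ‖M (x - y)‖ ^ 2) := by
    rw [dist_smul₀, mul_pow, WithLp.prod_dist_eq_of_L2, Real.sq_sqrt (by positivity),
      Real.norm_of_nonneg (by positivity), map_sub, ← dist_eq_norm]
    rfl
  rw [← sq_eq_sq₀ dist_nonneg dist_nonneg, ← sq_eq_sq₀ dist_nonneg dist_nonneg, hlift,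
    dist_eq_norm (L x), ← map_sub, dist_eq_norm x, inv_pow, eq_inv_mul_iff_mul_eq₀ (by positivity),
    ← hLM, add_left_inj]

section UniversallyRigid

variable {V : Type*} {d : ℕ} {G : SimpleGraph V} {p : V → EuclideanSpace ℝ (Fin d)}

theorem UniversallyRigid.of_dist_eq (hUR : UniversallyRigid G p)
    {p' : V → EuclideanSpace ℝ (Fin d)} (hp : ∀ i j, dist (p' i) (p' j) = dist (p i) (p j)) :
    UniversallyRigid G p' := by
  intro D hD q hq i j
  rw [hp]
  exact hUR D hD q (fun i j hij => hp i j ▸ hq i j hij) i j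

theorem UniversallyRigid.dist_eq_of_finrank_le (hUR : UniversallyRigid G p) {F : Type*}
    [NormedAddCommGroup F] [InnerProductSpace ℝ F] [FiniteDimensional ℝ F] (hF : d ≤ finrank ℝ F)
    {q : V → F}
    (hq : ∀ i j, G.Adj i j → dist (p i) (p j) = dist (q i) (q j)) (i j : V) :
    dist (p i) (p j) = dist (q i) (q j) := by
  let e := (stdOrthonormalBasis ℝ F).repr
  have hqe : ∀ i j, G.Adj i j → dist (p i) (p j) = dist (e (q i)) (e (q j)) := by
    simpa only [LinearIsometryEquiv.dist_map] using hq
  simpa only [Function.comp_apply, LinearIsometryEquiv.dist_map] using hUR _ hF (e ∘ q) hqe i j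

theorem UniversallyRigid.comp_linearMap (hUR : UniversallyRigid G p)
    (L : EuclideanSpace ℝ (Fin d) →ₗ[ℝ] EuclideanSpace ℝ (Fin d)) :
    UniversallyRigid G (fun i => L (p i)) := by
  obtain ⟨c, hc, m, M, hLM⟩ := (LinearMap.toContinuousLinearMap L).exists_norm_sq_add_norm_sq_eq
  intro D hD q hq i j
  let s : V → WithLp 2 (EuclideanSpace ℝ (Fin D) × EuclideanSpace ℝ (Fin m)) :=
    fun i => c⁻¹ • WithLp.toLp 2 (q i, M (p i))
  have hs : ∀ i j,
      dist (L (p i)) (L (p j)) = dist (q i) (q j) ↔ dist (p i) (p j) = dist (s i) (s j) :=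
    fun i j => dist_map_eq_iff_dist_eq_dist_smul_toLp hc hLM _ _ _ _
  have hfinrank :
      d ≤ finrank ℝ (WithLp 2 (EuclideanSpace ℝ (Fin D) × EuclideanSpace ℝ (Fin m))) := by
    rw [(WithLp.linearEquiv 2 ℝ _).finrank_eq, finrank_prod, finrank_euclideanSpace_fin]
    omega
  exact (hs i j).2 (hUR.dist_eq_of_finrank_le hfinrank (fun i j hij => (hs i j).1 (hq i j hij)) i j)

end UniversallyRigid

/-- Universal rigidity is invariant under arbitrary (possibly singular) affine transformations:
if `(G, p)` is universally rigid in `ℝ^d` and `A : ℝ^d → ℝ^d` is an affine map, then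
`(G, A ∘ p)` is universally rigid. -/
theorem universallyRigid_affineMap {V : Type*} {d : ℕ} (G : SimpleGraph V)
    (p : V → EuclideanSpace ℝ (Fin d))
    (A : EuclideanSpace ℝ (Fin d) →ᵃ[ℝ] EuclideanSpace ℝ (Fin d))
    (hUR : UniversallyRigid G p) :
    UniversallyRigid G (fun i => A (p i)) :=
  (hUR.comp_linearMap A.linear).of_dist_eq fun i j => by
    rw [dist_eq_norm_vsub, ← A.linearMap_vsub, vsub_eq_sub, map_sub, dist_eq_norm]
end

section
/- Suppose frameworks (G, q) in ℝ^d and (G, p) in ℝ^D, with p affinely spanning ℝ^D, both satisfy the equilibrium stress ω, and the stress matrix Ω(ω) has rank n − D − 1 (where n is the number of vertices). Then q is an affine image of p: there is an affine map A : ℝ^D → ℝ^d with q_i = A(p_i) for all i. -/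
/-- The stress matrix of a stress `ω`: off-diagonal entries `−ω i j`, diagonal entries
`∑ j, ω i j`. -/
def stressMatrix {n : ℕ} (ω : Fin n → Fin n → ℝ) : Matrix (Fin n) (Fin n) ℝ :=
  Matrix.of fun i j => if i = j then ∑ k, ω i k else -ω i j

/-!
Composing an equilibrium configuration with an affine function gives a vector in the kernel
of the stress matrix, so the `D + 1`-dimensional space of affine functions of `p` (`D + 1`
because `p` affinely spans) lies in that kernel; the rank hypothesis says the kernel has
dimension `D + 1`, hence the two coincide. Every coordinate of `q` lies in the kernel and is
therefore an affine function of `p`.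
-/

namespace AffineMap

variable (k : Type*) {V P ι : Type*} [Field k] [AddCommGroup V] [Module k V] [AddTorsor V P]

def evalOn (p : ι → P) : (P →ᵃ[k] k) →ₗ[k] ι → k where
  toFun f := f ∘ p
  map_add' _ _ := rfl
  map_smul' _ _ := rfl

variable {k}

theorem evalOn_injective {p : ι → P} (hp : affineSpan k (Set.range p) = ⊤) :
    Function.Injective (evalOn k p) := fun f g hfg =>
  ext_on hp <| by rintro _ ⟨i, rfl⟩; exact congrFun hfg i

theorem finrank_range_evalOn [FiniteDimensional k V] {p : ι → P}
    (hp : affineSpan k (Set.range p) = ⊤) :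
    Module.finrank k (LinearMap.range (evalOn k p)) = Module.finrank k V + 1 := by
  rw [LinearMap.finrank_range_of_inj (evalOn_injective hp), finrank_eq, Module.finrank_self,
    mul_one]

end AffineMap

section Stress

variable {n : ℕ} {ω : Fin n → Fin n → ℝ}

theorem stressMatrix_mulVec_apply (hω : ∀ i, ω i i = 0) (v : Fin n → ℝ) (i : Fin n) :
    (stressMatrix ω).mulVec v i = ∑ j, ω i j * (v i - v j) := by
  have hentry : ∀ j, stressMatrix ω i j = (if i = j then ∑ k, ω i k else 0) - ω i j := by
    intro j
    rcases eq_or_ne i j with rfl | hij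
    · simp [stressMatrix, hω i]
    · simp [stressMatrix, hij]
  simp only [Matrix.mulVec, dotProduct, hentry, sub_mul, mul_sub, Finset.sum_sub_distrib,
    ite_mul, zero_mul, Finset.sum_ite_eq, Finset.mem_univ, if_true, ← Finset.sum_mul]

theorem comp_mem_ker_stressMatrix {E : Type*} [AddCommGroup E] [Module ℝ E]
    (hω : ∀ i, ω i i = 0) {r : Fin n → E} (hr : ∀ i, ∑ j, ω i j • (r i - r j) = 0)
    (f : E →ᵃ[ℝ] ℝ) : (fun i => f (r i)) ∈ LinearMap.ker (stressMatrix ω).mulVecLin := by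
  rw [LinearMap.mem_ker]
  funext i
  have hlin : ∀ j, f (r i) - f (r j) = f.linear (r i - r j) := fun j => by
    simp only [← vsub_eq_sub, f.linearMap_vsub]
  rw [Matrix.mulVecLin_apply, stressMatrix_mulVec_apply hω]
  simp only [hlin, ← smul_eq_mul, ← map_smul, ← map_sum, hr, map_zero, Pi.zero_apply]

theorem range_evalOn_eq_ker_stressMatrix {E : Type*} [AddCommGroup E] [Module ℝ E]
    [FiniteDimensional ℝ E] (hω : ∀ i, ω i i = 0) {p : Fin n → E}
    (hspan : affineSpan ℝ (Set.range p) = ⊤) (hp : ∀ i, ∑ j, ω i j • (p i - p j) = 0)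
    (hrank : (stressMatrix ω).rank = n - Module.finrank ℝ E - 1) :
    LinearMap.range (AffineMap.evalOn ℝ p) = LinearMap.ker (stressMatrix ω).mulVecLin := by
  refine Submodule.eq_of_le_of_finrank_eq ?_ ?_
  · rintro _ ⟨f, rfl⟩
    exact comp_mem_ker_stressMatrix hω hp f
  · have hdim := AffineMap.finrank_range_evalOn hspan
    have hle := Submodule.finrank_le (LinearMap.range (AffineMap.evalOn ℝ p))
    have hnullity := LinearMap.finrank_range_add_finrank_ker (stressMatrix ω).mulVecLin
    rw [Module.finrank_fin_fun] at hle hnullity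
    change (stressMatrix ω).rank + _ = n at hnullity
    omega

end Stress

theorem affine_image_of_universal_stress_general {n d D : ℕ} (G : SimpleGraph (Fin n))
    (p : Fin n → EuclideanSpace ℝ (Fin D)) (q : Fin n → EuclideanSpace ℝ (Fin d))
    (ω : Fin n → Fin n → ℝ)
    (hsupp : ∀ i j, ¬ G.Adj i j → ω i j = 0)
    (hspan : affineSpan ℝ (Set.range p) = ⊤)
    (hp : ∀ i, ∑ j, ω i j • (p i - p j) = 0)
    (hq : ∀ i, ∑ j, ω i j • (q i - q j) = 0)
    (hrank : (stressMatrix ω).rank = n - D - 1) :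
    ∃ A : EuclideanSpace ℝ (Fin D) →ᵃ[ℝ] EuclideanSpace ℝ (Fin d), ∀ i, q i = A (p i) := by
  have hω : ∀ i, ω i i = 0 := fun i => hsupp i i (G.irrefl)
  have hker := range_evalOn_eq_ker_stressMatrix hω hspan hp (by rwa [finrank_euclideanSpace_fin])
  have hcoord : ∀ m, ∃ f : EuclideanSpace ℝ (Fin D) →ᵃ[ℝ] ℝ, ∀ i, f (p i) = q i m := fun m => by
    obtain ⟨f, hf⟩ := hker ▸
      comp_mem_ker_stressMatrix hω hq (EuclideanSpace.proj (𝕜 := ℝ) m).toLinearMap.toAffineMap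
    exact ⟨f, congrFun hf⟩
  choose f hf using hcoord
  refine ⟨(EuclideanSpace.equiv (Fin d) ℝ).symm.toLinearMap.toAffineMap.comp (AffineMap.pi f),
    fun i => ?_⟩
  ext m
  simp [AffineMap.pi_apply, hf]

/-- If frameworks `(G, q)` in `ℝ^d` and `(G, p)` in `ℝ^D`, with `p` affinely spanning `ℝ^D`,
both satisfy the equilibrium stress `ω`, and the stress matrix `Ω(ω)` has rank `n − D − 1`,
then `q` is an affine image of `p`. -/
theorem affine_image_of_universal_stress {n d D : ℕ} (G : SimpleGraph (Fin n))
    (p : Fin n → EuclideanSpace ℝ (Fin D)) (q : Fin n → EuclideanSpace ℝ (Fin d))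
    (ω : Fin n → Fin n → ℝ)
    (hsym : ∀ i j, ω i j = ω j i) (hsupp : ∀ i j, ¬ G.Adj i j → ω i j = 0)
    (hspan : affineSpan ℝ (Set.range p) = ⊤)
    (hp : ∀ i, ∑ j, ω i j • (p i - p j) = 0)
    (hq : ∀ i, ∑ j, ω i j • (q i - q j) = 0)
    (hrank : (stressMatrix ω).rank = n - D - 1) :
    ∃ A : EuclideanSpace ℝ (Fin D) →ᵃ[ℝ] EuclideanSpace ℝ (Fin d), ∀ i, q i = A (p i) :=
  affine_image_of_universal_stress_general G p q ω hsupp hspan hp hq hrank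
end
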